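/- arXiv:2411.13510 — 6 statements merged into one kernel-verified Lean document; each statement's English description precedes it below -/
import Mathlib

section
/- Let δ ∈ (0, 1/2] and let 𝒜, ℬ ⊆ 2^[n] be nonempty set families such that at least (1/2 + δ)·|𝒜|·|ℬ| ordered pairs (A, B) ∈ 𝒜 × ℬ satisfy that |A ∩ B| is even. Then |𝒜|·|ℬ| ≤ 2^n / (4δ²). The same conclusion holds if 'even' is replaced by 'odd'. -/
/-! The signs `(-1) ^ |A ∩ C|`, one for each `C ⊆ [n]`, are orthogonal characters of `2^[n]`:
summed over all `A` their pairwise products give `2^n` or `0`. Hence the `A`-rows of the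
`±1` matrix `(-1) ^ |A ∩ B|` restricted to `B ∈ ℬ` have total squared length `|ℬ| 2^n`, and
Cauchy–Schwarz over `𝒜` bounds the discrepancy `#even - #odd` by `√(|𝒜| |ℬ| 2^n)` (Lindsey's
lemma). A `(1/2 + δ)` bias of either parity makes that discrepancy at least `2δ |𝒜| |ℬ|`. -/

open Finset

section Parity

variable {ι : Type*} (s : Finset ι) (f : ι → ℕ)

lemma card_filter_even_add_card_filter_odd :
    #{i ∈ s | Even (f i)} + #{i ∈ s | Odd (f i)} = #s := by
  simp only [← Nat.not_even_iff_odd, card_filter_add_card_filter_not]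

lemma sum_neg_one_pow_eq_card_filter_even_sub_card_filter_odd {R : Type*} [Ring R] :
    ∑ i ∈ s, (-1 : R) ^ f i = #{i ∈ s | Even (f i)} - #{i ∈ s | Odd (f i)} := by
  rw [← sum_filter_add_sum_filter_not s fun i => Even (f i)]
  simp only [← Nat.not_even_iff_odd]
  rw [sum_congr rfl fun i hi => (mem_filter.1 hi).2.neg_one_pow,
    sum_congr rfl fun i hi => (Nat.not_even_iff_odd.1 (mem_filter.1 hi).2).neg_one_pow]
  simp [sub_eq_add_neg]

end Parity

section Walsh

variable {α R : Type*} [DecidableEq α] [CommRing R]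

lemma neg_one_pow_card_inter (A C : Finset α) :
    (-1 : R) ^ #(A ∩ C) = ∏ i ∈ A, if i ∈ C then -1 else 1 := by
  rw [prod_ite_mem, prod_const]

lemma neg_one_pow_card_inter_mul_neg_one_pow_card_inter (A B C : Finset α) :
    (-1 : R) ^ #(A ∩ B) * (-1) ^ #(A ∩ C) = (-1) ^ #(A ∩ symmDiff B C) := by
  simp only [neg_one_pow_card_inter, ← prod_mul_distrib]
  refine prod_congr rfl fun i _ => ?_
  by_cases hB : i ∈ B <;> by_cases hC : i ∈ C <;> simp [mem_symmDiff, hB, hC]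

variable [Fintype α]

lemma sum_neg_one_pow_card_inter (C : Finset α) :
    ∑ A : Finset α, (-1 : R) ^ #(A ∩ C) = if C = ∅ then 2 ^ Fintype.card α else 0 := by
  have hprod : ∏ i : α, ((if i ∈ C then -1 else 1) + 1 : R) =
      ∑ A : Finset α, (-1 : R) ^ #(A ∩ C) := by
    rw [prod_add, powerset_univ]
    refine sum_congr rfl fun A _ => ?_
    rw [prod_const_one, mul_one, neg_one_pow_card_inter]
  rw [← hprod]
  split_ifs with hC
  · simp [hC, one_add_one_eq_two]
  · obtain ⟨i, hi⟩ := nonempty_iff_ne_empty.2 hC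
    exact prod_eq_zero (mem_univ i) (by simp [hi])

lemma sum_neg_one_pow_card_inter_mul_neg_one_pow_card_inter (B C : Finset α) :
    ∑ A : Finset α, (-1 : R) ^ #(A ∩ B) * (-1) ^ #(A ∩ C) =
      if B = C then 2 ^ Fintype.card α else 0 := by
  simp only [neg_one_pow_card_inter_mul_neg_one_pow_card_inter, sum_neg_one_pow_card_inter,
    ← bot_eq_empty, symmDiff_eq_bot]

lemma sum_sq_sum_neg_one_pow_card_inter (ℬ : Finset (Finset α)) :
    ∑ A : Finset α, (∑ B ∈ ℬ, (-1 : R) ^ #(A ∩ B)) ^ 2 = #ℬ * 2 ^ Fintype.card α := by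
  simp only [sq, sum_mul_sum]
  rw [sum_comm]
  simp only [sum_comm (s := univ), sum_neg_one_pow_card_inter_mul_neg_one_pow_card_inter,
    sum_ite_eq, sum_ite_mem]
  simp

lemma sq_sum_sum_neg_one_pow_card_inter_le [LinearOrder R] [IsStrictOrderedRing R]
    (𝒜 ℬ : Finset (Finset α)) :
    (∑ A ∈ 𝒜, ∑ B ∈ ℬ, (-1 : R) ^ #(A ∩ B)) ^ 2 ≤ #𝒜 * #ℬ * 2 ^ Fintype.card α :=
  calc _ ≤ #𝒜 * ∑ A ∈ 𝒜, (∑ B ∈ ℬ, (-1 : R) ^ #(A ∩ B)) ^ 2 := sq_sum_le_card_mul_sum_sq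
    _ ≤ #𝒜 * ∑ A : Finset α, (∑ B ∈ ℬ, (-1 : R) ^ #(A ∩ B)) ^ 2 := by
      gcongr
      exact subset_univ 𝒜
    _ = #𝒜 * #ℬ * 2 ^ Fintype.card α := by
      rw [sum_sq_sum_neg_one_pow_card_inter, mul_assoc]

lemma sq_card_even_inter_sub_card_odd_inter_le (𝒜 ℬ : Finset (Finset α)) :
    ((#{p ∈ 𝒜 ×ˢ ℬ | Even #(p.1 ∩ p.2)} : ℝ) - #{p ∈ 𝒜 ×ˢ ℬ | Odd #(p.1 ∩ p.2)}) ^ 2 ≤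
      #𝒜 * #ℬ * 2 ^ Fintype.card α := by
  rw [← sum_neg_one_pow_eq_card_filter_even_sub_card_filter_odd, sum_product]
  exact sq_sum_sum_neg_one_pow_card_inter_le 𝒜 ℬ

end Walsh

theorem even_odd_intersections_general (n : ℕ) (δ : ℝ) (hδ : δ ∈ Set.Ioc (0 : ℝ) (1/2))
    (𝒜 ℬ : Finset (Finset (Fin n)))
    (h : (1/2 + δ) * ((𝒜.card : ℝ) * (ℬ.card : ℝ)) ≤
          (((𝒜 ×ˢ ℬ).filter fun p => Even (p.1 ∩ p.2).card).card : ℝ) ∨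
        (1/2 + δ) * ((𝒜.card : ℝ) * (ℬ.card : ℝ)) ≤
          (((𝒜 ×ˢ ℬ).filter fun p => Odd (p.1 ∩ p.2).card).card : ℝ)) :
    (𝒜.card : ℝ) * (ℬ.card : ℝ) ≤ 2 ^ n / (4 * δ ^ 2) := by
  obtain ⟨hδ0, -⟩ := hδ
  set N : ℝ := #𝒜 * #ℬ
  set E : ℝ := ((#{p ∈ 𝒜 ×ˢ ℬ | Even #(p.1 ∩ p.2)} : ℕ) : ℝ)
  set O : ℝ := ((#{p ∈ 𝒜 ×ˢ ℬ | Odd #(p.1 ∩ p.2)} : ℕ) : ℝ)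
  have hN : 0 ≤ N := by positivity
  have hEO : E + O = N := by
    simp only [E, O, N]
    exact_mod_cast (card_filter_even_add_card_filter_odd _ _).trans (card_product 𝒜 ℬ)
  have hbias : 2 * δ * N ≤ |E - O| := by
    rcases h with h | h
    · exact (le_abs_self _).trans' (by linarith)
    · exact (neg_le_abs _).trans' (by linarith)
  have hlindsey : (E - O) ^ 2 ≤ N * 2 ^ n := by
    simpa using sq_card_even_inter_sub_card_odd_inter_le 𝒜 ℬ
  have hsq : (2 * δ * N) ^ 2 ≤ N * 2 ^ n :=
    calc (2 * δ * N) ^ 2 ≤ |E - O| ^ 2 := by gcongr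
      _ = (E - O) ^ 2 := sq_abs _
      _ ≤ N * 2 ^ n := hlindsey
  rw [le_div_iff₀ (by positivity)]
  rcases hN.eq_or_lt with hN0 | hNpos
  · rw [← hN0, zero_mul]; positivity
  · exact le_of_mul_le_mul_left (by linarith) hNpos

/-- **Families with many even (or odd) intersections.** Let `δ ∈ (0, 1/2]` and let
`𝒜, ℬ ⊆ 2^[n]` be nonempty families such that at least `(1/2+δ)·|𝒜|·|ℬ|` ordered pairs
`(A,B) ∈ 𝒜 × ℬ` have `|A ∩ B|` even (or, alternatively, odd). Then
`|𝒜|·|ℬ| ≤ 2^n / (4δ²)`. -/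
theorem even_odd_intersections (n : ℕ) (δ : ℝ) (hδ : δ ∈ Set.Ioc (0 : ℝ) (1/2))
    (𝒜 ℬ : Finset (Finset (Fin n))) (h𝒜 : 𝒜.Nonempty) (hℬ : ℬ.Nonempty)
    (h : (1/2 + δ) * ((𝒜.card : ℝ) * (ℬ.card : ℝ)) ≤
          (((𝒜 ×ˢ ℬ).filter fun p => Even (p.1 ∩ p.2).card).card : ℝ) ∨
        (1/2 + δ) * ((𝒜.card : ℝ) * (ℬ.card : ℝ)) ≤
          (((𝒜 ×ˢ ℬ).filter fun p => Odd (p.1 ∩ p.2).card).card : ℝ)) :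
    (𝒜.card : ℝ) * (ℬ.card : ℝ) ≤ 2 ^ n / (4 * δ ^ 2) :=
  even_odd_intersections_general n δ hδ 𝒜 ℬ h
end

section
/- Let n ≥ r ≥ 1 be positive integers and let μ be a probability distribution on 2^[n], i.e. a function μ : 2^[n] → [0, 1] with Σ_{A ⊆ [n]} μ(A) = 1. If A₀, A₁, …, A_r are drawn independently from μ, then the probability that A₀ ⊆ A₁ ∪ ⋯ ∪ A_r is at least 2^(−n/r − 2). Equivalently, Σ over all (r+1)-tuples (A₀, A₁, …, A_r) of subsets of [n] with A₀ ⊆ A₁ ∪ ⋯ ∪ A_r of the product μ(A₀)·μ(A₁)⋯μ(A_r) is at least 2^(−n/r − 2). -/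
/-!
Write `g = (A₁, …, A_r)`, `U = A₁ ∪ ⋯ ∪ A_r` and `F(u) = μ{A : A ⊆ u}`. The probability in
question is `E F(U)`, and `E F(U) ≥ exp E log F(U)` by Jensen, so it suffices to show
`E log F(U) ≥ -n log 2 / r`.
For each `i`, the conditional law of `Aᵢ` given `U = u` lives on subsets of `u`, so Gibbs'
inequality against `μ` restricted to those subsets gives `E log F(U) ≥ -I(Aᵢ; U)`. As the `Aᵢ`
are independent, `∑ᵢ I(Aᵢ; U) ≤ H(U) ≤ n log 2`.
-/

open Finset Real

lemma mul_log_div_le_mul_log_add {w y Y : ℝ} (hw : 0 ≤ w) (hy : 0 ≤ y) (hwy : w ≠ 0 → y ≠ 0)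
    (hY : 0 < Y) : w * log (y / w) ≤ w * log Y + (y / Y - w) := by
  rcases hw.eq_or_lt with rfl | hw
  · simpa using div_nonneg hy hY.le
  have hy : 0 < y := hy.lt_of_ne' (hwy hw.ne')
  have hlog : log (y / w) - log Y = log (y / (w * Y)) := by
    rw [← log_div (by positivity) hY.ne', div_div]
  calc w * log (y / w) = w * log Y + w * log (y / (w * Y)) := by rw [← hlog]; ring
    _ ≤ w * log Y + w * (y / (w * Y) - 1) := by
        gcongr; exact log_le_sub_one_of_pos (by positivity)
    _ = w * log Y + (y / Y - w) := by field_simp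

lemma sum_pos_of_ne_zero_imp_ne_zero {ι : Type*} {s : Finset ι} {w y : ι → ℝ}
    (hy : ∀ i ∈ s, 0 ≤ y i) (hwy : ∀ i ∈ s, w i ≠ 0 → y i ≠ 0) (hw : ∑ i ∈ s, w i = 1) :
    0 < ∑ i ∈ s, y i := by
  obtain ⟨i, hi, hwi⟩ := exists_ne_zero_of_sum_ne_zero (hw ▸ one_ne_zero)
  exact (hy i hi).lt_of_ne' (hwy i hi hwi) |>.trans_le (single_le_sum hy hi)

theorem sum_mul_log_div_le_log_sum {ι : Type*} (s : Finset ι) {w y : ι → ℝ}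
    (hw : ∀ i ∈ s, 0 ≤ w i) (hy : ∀ i ∈ s, 0 ≤ y i) (hwy : ∀ i ∈ s, w i ≠ 0 → y i ≠ 0)
    (hw1 : ∑ i ∈ s, w i = 1) :
    ∑ i ∈ s, w i * log (y i / w i) ≤ log (∑ i ∈ s, y i) := by
  have hY := sum_pos_of_ne_zero_imp_ne_zero hy hwy hw1
  calc ∑ i ∈ s, w i * log (y i / w i)
      ≤ ∑ i ∈ s, (w i * log (∑ j ∈ s, y j) + (y i / ∑ j ∈ s, y j - w i)) :=
        sum_le_sum fun i hi => mul_log_div_le_mul_log_add (hw i hi) (hy i hi) (hwy i hi) hY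
    _ = log (∑ i ∈ s, y i) := by
        rw [sum_add_distrib, ← sum_mul, sum_sub_distrib, ← sum_div, hw1, div_self hY.ne']
        ring

section fiberSum

variable {Ω κ : Type*} [Fintype Ω] [DecidableEq κ] {P : Ω → ℝ} {f : Ω → κ}

def fiberSum (P : Ω → ℝ) (f : Ω → κ) (k : κ) : ℝ := ∑ x with f x = k, P x

lemma fiberSum_nonneg (hP : ∀ x, 0 ≤ P x) (k : κ) : 0 ≤ fiberSum P f k :=
  sum_nonneg fun x _ => hP x

lemma le_fiberSum (hP : ∀ x, 0 ≤ P x) (x : Ω) : P x ≤ fiberSum P f (f x) :=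
  single_le_sum (fun y _ => hP y) (by simp)

lemma exists_ne_zero_of_fiberSum_ne_zero {k : κ} (h : fiberSum P f k ≠ 0) :
    ∃ x, f x = k ∧ P x ≠ 0 := by
  obtain ⟨x, hx, hPx⟩ := exists_ne_zero_of_sum_ne_zero h
  exact ⟨x, (mem_filter.1 hx).2, hPx⟩

lemma sum_fiberSum_mul [Fintype κ] (φ : κ → ℝ) :
    ∑ k, fiberSum P f k * φ k = ∑ x, P x * φ (f x) := by
  simp only [fiberSum, sum_mul]
  rw [← sum_fiberwise univ f (fun x => P x * φ (f x))]
  refine sum_congr rfl fun k _ => sum_congr rfl fun x hx => ?_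
  rw [(mem_filter.1 hx).2]

lemma sum_fiberSum [Fintype κ] : ∑ k, fiberSum P f k = ∑ x, P x :=
  sum_fiberwise univ f P

lemma fiberSum_pair_le {κ' : Type*} [DecidableEq κ'] (hP : ∀ x, 0 ≤ P x) (h : Ω → κ') (a : κ')
    (k : κ) :
    fiberSum P (fun x => (h x, f x)) (a, k) ≤ fiberSum P f k :=
  sum_le_sum_of_subset_of_nonneg (monotone_filter_right _ fun _ _ hx => (Prod.mk.inj hx).2)
    fun x _ _ => hP x

lemma sum_fiberSum_pair {κ' : Type*} [Fintype κ'] [DecidableEq κ'] (h : Ω → κ') (k : κ) :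
    ∑ a, fiberSum P (fun x => (h x, f x)) (a, k) = fiberSum P f k := by
  simp only [fiberSum, Prod.mk.injEq]
  rw [← sum_fiberwise (univ.filter (f · = k)) h P]
  simp only [filter_filter, and_comm]

end fiberSum

lemma neg_log_card_le_sum_mul_log {ι : Type*} [Fintype ι] {w : ι → ℝ} (hw : ∀ i, 0 ≤ w i)
    (hw1 : ∑ i, w i = 1) : -log (Fintype.card ι) ≤ ∑ i, w i * log (w i) := by
  have := sum_mul_log_div_le_log_sum univ (fun i _ => hw i) (fun _ _ => zero_le_one)
    (fun _ _ _ => one_ne_zero) hw1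
  simp only [one_div, log_inv, mul_neg, sum_neg_distrib, sum_const, card_univ, nsmul_one] at this
  linarith

lemma exp_sum_mul_log_le_sum_mul {ι : Type*} {s : Finset ι} {w x : ι → ℝ}
    (hw : ∀ i ∈ s, 0 ≤ w i) (hx : ∀ i ∈ s, w i ≠ 0 → 0 < x i) (hw1 : ∑ i ∈ s, w i = 1) :
    exp (∑ i ∈ s, w i * log (x i)) ≤ ∑ i ∈ s, w i * x i := by
  have hwx : ∀ i ∈ s, 0 ≤ w i * x i := fun i hi => by
    rcases (hw i hi).eq_or_lt with h | h
    · simp [← h]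
    · exact mul_nonneg h.le (hx i hi h.ne').le
  have hwx0 : ∀ i ∈ s, w i ≠ 0 → w i * x i ≠ 0 := fun i hi h => mul_ne_zero h (hx i hi h).ne'
  rw [← exp_log (sum_pos_of_ne_zero_imp_ne_zero hwx hwx0 hw1), exp_le_exp]
  convert sum_mul_log_div_le_log_sum s hw hwx hwx0 hw1 using 2 with i hi
  rcases eq_or_ne (w i) 0 with h | h
  · simp [h]
  · rw [mul_div_cancel_left₀ _ h]

section Covering

variable {ι β : Type*} [Fintype ι]

def piWeight (μ : β → ℝ) (g : ι → β) : ℝ := ∏ i, μ (g i)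

variable {μ : β → ℝ}

lemma piWeight_nonneg (hμ : ∀ a, 0 ≤ μ a) (g : ι → β) : 0 ≤ piWeight μ g :=
  prod_nonneg fun i _ => hμ (g i)

lemma apply_ne_zero_of_piWeight_ne_zero {g : ι → β} (hg : piWeight μ g ≠ 0) (i : ι) :
    μ (g i) ≠ 0 :=
  prod_ne_zero_iff.1 hg i (mem_univ i)

variable [DecidableEq ι] [Fintype β]

lemma sum_piWeight (hμ : ∑ a, μ a = 1) : ∑ g : ι → β, piWeight μ g = 1 := by
  simp [piWeight, ← Fintype.prod_sum, hμ]

variable [DecidableEq β]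

/-- The conditional law of `g i` given `U g = u` (junk value `0` when `U g = u` is null). -/
noncomputable def condLaw (μ : β → ℝ) (U : (ι → β) → β) (i : ι) (a u : β) : ℝ :=
  fiberSum (piWeight μ) (fun g => (g i, U g)) (a, u) / fiberSum (piWeight μ) U u

variable {U : (ι → β) → β}

lemma condLaw_nonneg (hμ : ∀ a, 0 ≤ μ a) (i : ι) (a u : β) : 0 ≤ condLaw μ U i a u :=
  div_nonneg (fiberSum_nonneg (piWeight_nonneg hμ) _) (fiberSum_nonneg (piWeight_nonneg hμ) _)

lemma mul_condLaw (hμ : ∀ a, 0 ≤ μ a) (i : ι) (a u : β) :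
    fiberSum (piWeight μ) U u * condLaw μ U i a u =
      fiberSum (piWeight μ) (fun g => (g i, U g)) (a, u) :=
  mul_div_cancel_of_imp' fun h => le_antisymm (h ▸ fiberSum_pair_le (piWeight_nonneg hμ) _ _ _)
    (fiberSum_nonneg (piWeight_nonneg hμ) _)

lemma sum_condLaw {u : β} (hu : fiberSum (piWeight μ) U u ≠ 0) (i : ι) :
    ∑ a, condLaw μ U i a u = 1 := by
  simp only [condLaw]
  rw [← sum_div, sum_fiberSum_pair, div_self hu]

lemma condLaw_pos (hμ : ∀ a, 0 ≤ μ a) {g : ι → β} (hg : piWeight μ g ≠ 0) (i : ι) :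
    0 < condLaw μ U i (g i) (U g) := by
  have hP : 0 < piWeight μ g := (piWeight_nonneg hμ g).lt_of_ne' hg
  exact div_pos (hP.trans_le (le_fiberSum (piWeight_nonneg hμ) g))
    (hP.trans_le (le_fiberSum (piWeight_nonneg hμ) g))

lemma sum_piWeight_mul_eq_sum_condLaw (hμ : ∀ a, 0 ≤ μ a) (i : ι) (φ : β → β → ℝ) :
    ∑ g, piWeight μ g * φ (g i) (U g) =
      ∑ u, fiberSum (piWeight μ) U u * ∑ a, condLaw μ U i a u * φ a u := by
  rw [← sum_fiberSum_mul (f := fun g => (g i, U g)) (fun x => φ x.1 x.2),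
    Fintype.sum_prod_type_right]
  simp only [mul_sum, ← mul_assoc, mul_condLaw hμ]

/-- The law making the coordinates of `g` conditionally independent given `U g`, with the
conditional marginals `condLaw`; comparing `piWeight` with it gives `∑ᵢ I(gᵢ; U) ≤ H(U)`. -/
noncomputable def condIndepWeight (μ : β → ℝ) (U : (ι → β) → β) (g : ι → β) : ℝ :=
  fiberSum (piWeight μ) U (U g) * ∏ i, condLaw μ U i (g i) (U g)

lemma condIndepWeight_nonneg (hμ : ∀ a, 0 ≤ μ a) (g : ι → β) : 0 ≤ condIndepWeight μ U g :=
  mul_nonneg (fiberSum_nonneg (piWeight_nonneg hμ) _)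
    (prod_nonneg fun i _ => condLaw_nonneg hμ i _ _)

lemma sum_condIndepWeight_le_one (hμ : ∀ a, 0 ≤ μ a) (hμ1 : ∑ a, μ a = 1) :
    ∑ g, condIndepWeight μ U g ≤ 1 := by
  have hc : ∀ u (g : ι → β), 0 ≤ ∏ i, condLaw μ U i (g i) u :=
    fun u g => prod_nonneg fun i _ => condLaw_nonneg hμ i _ _
  calc ∑ g, condIndepWeight μ U g
      = ∑ u, fiberSum (piWeight μ) U u *
          ∑ g : ι → β with U g = u, ∏ i, condLaw μ U i (g i) u := by
        rw [← sum_fiberwise univ U]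
        refine sum_congr rfl fun u _ => ?_
        rw [mul_sum]
        refine sum_congr rfl fun g hg => ?_
        rw [condIndepWeight, (mem_filter.1 hg).2]
    _ ≤ ∑ u, fiberSum (piWeight μ) U u * ∑ g : ι → β, ∏ i, condLaw μ U i (g i) u := by
        refine sum_le_sum fun u _ => mul_le_mul_of_nonneg_left ?_
          (fiberSum_nonneg (piWeight_nonneg hμ) u)
        exact sum_le_sum_of_subset_of_nonneg (subset_univ _) fun g _ _ => hc u g
    _ = ∑ u, fiberSum (piWeight μ) U u := by
        refine sum_congr rfl fun u _ => ?_
        rw [← Fintype.prod_sum fun i a => condLaw μ U i a u]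
        rcases eq_or_ne (fiberSum (piWeight μ) U u) 0 with hu | hu
        · rw [hu, zero_mul]
        · simp [sum_condLaw hu]
    _ = 1 := sum_fiberSum.trans (sum_piWeight hμ1)

lemma fiberSum_piWeight_pos (hμ : ∀ a, 0 ≤ μ a) {g : ι → β} (hg : piWeight μ g ≠ 0) :
    0 < fiberSum (piWeight μ) U (U g) :=
  (piWeight_nonneg hμ g).lt_of_ne' hg |>.trans_le (le_fiberSum (piWeight_nonneg hμ) g)

lemma condIndepWeight_pos (hμ : ∀ a, 0 ≤ μ a) {g : ι → β} (hg : piWeight μ g ≠ 0) :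
    0 < condIndepWeight μ U g :=
  mul_pos (fiberSum_piWeight_pos hμ hg) (prod_pos fun i _ => condLaw_pos hμ hg i)

lemma log_condIndepWeight_div_piWeight (hμ : ∀ a, 0 ≤ μ a) {g : ι → β}
    (hg : piWeight μ g ≠ 0) :
    log (condIndepWeight μ U g / piWeight μ g) =
      log (fiberSum (piWeight μ) U (U g)) - ∑ i, log (μ (g i) / condLaw μ U i (g i) (U g)) := by
  have hp := (fiberSum_piWeight_pos (U := U) hμ hg).ne'
  have hc : ∀ i, condLaw μ U i (g i) (U g) ≠ 0 := fun i => (condLaw_pos hμ hg i).ne'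
  have hμg := apply_ne_zero_of_piWeight_ne_zero hg
  rw [log_div (condIndepWeight_pos hμ hg).ne' hg, condIndepWeight,
    log_mul hp (prod_ne_zero_iff.2 fun i _ => hc i), piWeight, log_prod fun i _ => hc i,
    log_prod fun i _ => hμg i]
  simp only [log_div (hμg _) (hc _), sum_sub_distrib]
  ring

lemma sum_piWeight_mul_log_fiberSum_le (hμ : ∀ a, 0 ≤ μ a) (hμ1 : ∑ a, μ a = 1) :
    ∑ g, piWeight μ g * log (fiberSum (piWeight μ) U (U g)) ≤
      ∑ g, piWeight μ g * ∑ i, log (μ (g i) / condLaw μ U i (g i) (U g)) := by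
  have hgibbs := sum_mul_log_div_le_log_sum univ (fun (g : ι → β) _ => piWeight_nonneg hμ g)
    (fun g _ => condIndepWeight_nonneg (U := U) hμ g)
    (fun g _ hg => (condIndepWeight_pos hμ hg).ne') (sum_piWeight hμ1)
  have hterm : ∀ g, piWeight μ g * log (condIndepWeight μ U g / piWeight μ g) =
      piWeight μ g * log (fiberSum (piWeight μ) U (U g)) -
        piWeight μ g * ∑ i, log (μ (g i) / condLaw μ U i (g i) (U g)) := fun g => by
    rcases eq_or_ne (piWeight μ g) 0 with hg | hg
    · simp [hg]
    · rw [log_condIndepWeight_div_piWeight hμ hg, mul_sub]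
  rw [sum_congr rfl fun g _ => hterm g, sum_sub_distrib] at hgibbs
  linarith [log_nonpos (sum_nonneg fun g _ => condIndepWeight_nonneg (U := U) hμ g)
    (sum_condIndepWeight_le_one hμ hμ1)]

variable [Preorder β]

lemma ne_zero_and_le_of_condLaw_ne_zero (hU : ∀ g i, g i ≤ U g) {i : ι} {a u : β}
    (h : condLaw μ U i a u ≠ 0) : μ a ≠ 0 ∧ a ≤ u := by
  have hJ : fiberSum (piWeight μ) (fun g => (g i, U g)) (a, u) ≠ 0 :=
    fun h0 => h (by rw [condLaw, h0, zero_div])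
  obtain ⟨g, hg, hP⟩ := exists_ne_zero_of_fiberSum_ne_zero hJ
  obtain ⟨rfl, rfl⟩ := Prod.mk.inj hg
  exact ⟨apply_ne_zero_of_piWeight_ne_zero hP i, hU g i⟩

variable [DecidableLE β]

def lowerMass (μ : β → ℝ) (u : β) : ℝ := ∑ a with a ≤ u, μ a

lemma lowerMass_pos [Nonempty ι] (hU : ∀ g i, g i ≤ U g) (hμ : ∀ a, 0 ≤ μ a) {u : β}
    (hu : fiberSum (piWeight μ) U u ≠ 0) : 0 < lowerMass μ u := by
  obtain ⟨g, rfl, hg⟩ := exists_ne_zero_of_fiberSum_ne_zero hu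
  obtain ⟨i⟩ := ‹Nonempty ι›
  exact ((hμ _).lt_of_ne' (apply_ne_zero_of_piWeight_ne_zero hg i)).trans_le
    (single_le_sum (fun a _ => hμ a) (mem_filter.2 ⟨mem_univ _, hU g i⟩))

lemma sum_piWeight_mul_log_div_condLaw_le (hU : ∀ g i, g i ≤ U g) (hμ : ∀ a, 0 ≤ μ a)
    (i : ι) :
    ∑ g, piWeight μ g * log (μ (g i) / condLaw μ U i (g i) (U g)) ≤
      ∑ u, fiberSum (piWeight μ) U u * log (lowerMass μ u) := by
  rw [sum_piWeight_mul_eq_sum_condLaw hμ i fun a u => log (μ a / condLaw μ U i a u)]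
  refine sum_le_sum fun u _ => ?_
  rcases eq_or_ne (fiberSum (piWeight μ) U u) 0 with hu | hu
  · simp [hu]
  refine mul_le_mul_of_nonneg_left ?_ (fiberSum_nonneg (piWeight_nonneg hμ) u)
  have hsupp : ∀ a ∈ univ, condLaw μ U i a u ≠ 0 → a ≤ u :=
    fun a _ h => (ne_zero_and_le_of_condLaw_ne_zero hU h).2
  rw [← sum_filter_of_ne fun a ha h => hsupp a ha (left_ne_zero_of_mul h)]
  exact sum_mul_log_div_le_log_sum _ (fun a _ => condLaw_nonneg hμ i a u) (fun a _ => hμ a)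
    (fun a _ h => (ne_zero_and_le_of_condLaw_ne_zero hU h).1)
    (by rw [sum_filter_of_ne hsupp, sum_condLaw hu])

theorem neg_log_card_le_card_mul_sum_mul_log_lowerMass (hU : ∀ g i, g i ≤ U g)
    (hμ : ∀ a, 0 ≤ μ a) (hμ1 : ∑ a, μ a = 1) :
    -log (Fintype.card β) ≤
      Fintype.card ι * ∑ u, fiberSum (piWeight μ) U u * log (lowerMass μ u) := by
  calc -log (Fintype.card β)
      ≤ ∑ u, fiberSum (piWeight μ) U u * log (fiberSum (piWeight μ) U u) :=
        neg_log_card_le_sum_mul_log (fiberSum_nonneg (piWeight_nonneg hμ))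
          (sum_fiberSum.trans (sum_piWeight hμ1))
    _ = ∑ g, piWeight μ g * log (fiberSum (piWeight μ) U (U g)) := sum_fiberSum_mul _
    _ ≤ ∑ g, piWeight μ g * ∑ i, log (μ (g i) / condLaw μ U i (g i) (U g)) :=
        sum_piWeight_mul_log_fiberSum_le hμ hμ1
    _ = ∑ i, ∑ g, piWeight μ g * log (μ (g i) / condLaw μ U i (g i) (U g)) := by
        simp only [mul_sum]
        exact sum_comm
    _ ≤ ∑ _i : ι, ∑ u, fiberSum (piWeight μ) U u * log (lowerMass μ u) :=
        sum_le_sum fun i _ => sum_piWeight_mul_log_div_condLaw_le hU hμ i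
    _ = _ := by rw [sum_const, card_univ, nsmul_eq_mul]

theorem card_rpow_neg_inv_le_sum_piWeight_mul_lowerMass [Nonempty ι]
    (hU : ∀ g i, g i ≤ U g) (hμ : ∀ a, 0 ≤ μ a) (hμ1 : ∑ a, μ a = 1) :
    (Fintype.card β : ℝ) ^ (-(Fintype.card ι : ℝ)⁻¹) ≤
      ∑ g, piWeight μ g * lowerMass μ (U g) := by
  obtain ⟨a, -, -⟩ := exists_ne_zero_of_sum_ne_zero (hμ1 ▸ one_ne_zero : ∑ a, μ a ≠ 0)
  have hβ : (0 : ℝ) < Fintype.card β := by exact_mod_cast Fintype.card_pos_iff.2 ⟨a⟩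
  have hι : (0 : ℝ) < Fintype.card ι := by exact_mod_cast Fintype.card_pos
  rw [← sum_fiberSum_mul, rpow_def_of_pos hβ]
  refine le_trans ?_ (exp_sum_mul_log_le_sum_mul
    (fun u _ => fiberSum_nonneg (piWeight_nonneg hμ) u) (fun u _ hu => lowerMass_pos hU hμ hu)
    (sum_fiberSum.trans (sum_piWeight hμ1)))
  rw [exp_le_exp, mul_neg, ← div_eq_mul_inv, neg_le, le_div_iff₀ hι]
  linarith [neg_log_card_le_card_mul_sum_mul_log_lowerMass hU hμ hμ1]

end Covering

theorem covering_lemma_general (n r : ℕ) (hr : 1 ≤ r)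
    (μ : Finset (Fin n) → ℝ) (hμ0 : ∀ A, 0 ≤ μ A)
    (hsum : ∑ A : Finset (Fin n), μ A = 1) :
    (2 : ℝ) ^ (-(n : ℝ) / (r : ℝ) - 2) ≤
      ∑ A₀ : Finset (Fin n), ∑ g : Fin r → Finset (Fin n),
        (if A₀ ⊆ Finset.univ.biUnion g then μ A₀ * ∏ i, μ (g i) else 0) := by
  have : Nonempty (Fin r) := ⟨⟨0, hr⟩⟩
  have hcover := card_rpow_neg_inv_le_sum_piWeight_mul_lowerMass (ι := Fin r)
    (β := Finset (Fin n)) (fun g i => subset_biUnion_of_mem g (mem_univ i)) hμ0 hsum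
  have hsum_eq : ∑ A₀ : Finset (Fin n), ∑ g : Fin r → Finset (Fin n),
      (if A₀ ⊆ univ.biUnion g then μ A₀ * ∏ i, μ (g i) else 0) =
        ∑ g : Fin r → Finset (Fin n), piWeight μ g * lowerMass μ (univ.biUnion g) := by
    rw [sum_comm]
    refine sum_congr rfl fun g _ => ?_
    rw [lowerMass, sum_filter, mul_sum]
    exact sum_congr rfl fun A _ => by split_ifs <;> simp [piWeight, mul_comm]
  have hpow : (Fintype.card (Finset (Fin n)) : ℝ) ^ (-(Fintype.card (Fin r) : ℝ)⁻¹) =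
      (2 : ℝ) ^ (-(n : ℝ) / r) := by
    simp only [Fintype.card_finset, Fintype.card_fin, Nat.cast_pow, Nat.cast_ofNat]
    rw [← rpow_natCast_mul zero_le_two, neg_div, div_eq_mul_inv, mul_neg]
  rw [hsum_eq]
  refine le_trans ?_ (hpow ▸ hcover)
  exact rpow_le_rpow_of_exponent_le one_le_two (by linarith)

/-- **Covering lemma.** Let `n ≥ r ≥ 1` and let `μ` be a probability distribution on
`2^[n]`. If `A₀, A₁, …, A_r` are drawn independently from `μ`, then the probability that
`A₀ ⊆ A₁ ∪ ⋯ ∪ A_r` is at least `2^(−n/r − 2)`. The probability is expressed as the sum,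
over all tuples `(A₀, g)` with `A₀ ⊆ ⋃ i, g i`, of `μ(A₀)·∏ i, μ(g i)`. -/
theorem covering_lemma (n r : ℕ) (hr : 1 ≤ r) (hn : r ≤ n)
    (μ : Finset (Fin n) → ℝ) (hμ0 : ∀ A, 0 ≤ μ A) (hμ1 : ∀ A, μ A ≤ 1)
    (hsum : ∑ A : Finset (Fin n), μ A = 1) :
    (2 : ℝ) ^ (-(n : ℝ) / (r : ℝ) - 2) ≤
      ∑ A₀ : Finset (Fin n), ∑ g : Fin r → Finset (Fin n),
        (if A₀ ⊆ Finset.univ.biUnion g then μ A₀ * ∏ i, μ (g i) else 0) :=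
  covering_lemma_general n r hr μ hμ0 hsum
end

section
/- Let H be a bipartite graph with parts X and Y and with at least ε·|X|·|Y| edges, where ε ∈ (0, 1]. Then there exist subsets X' ⊆ X and Y' ⊆ Y such that |X'|·|Y'| ≥ (ε/2)·|X|·|Y|, and for every x ∈ X' the number of neighbours of x in Y' is at least ε·|Y|/4, and for every y ∈ Y' the number of neighbours of y in X' is at least ε·|X|/4. -/
/-!
Write `a = ε|Y|/4`, `b = ε|X|/4` and `e(S, T)` for the number of edges between `S` and `T`.
Deleting a vertex of `S` with fewer than `a` neighbours in `T`, or a vertex of `T` with fewer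
than `b` neighbours in `S`, does not decrease the excess `e(S, T) - a|S| - b|T|`. So a pair
`X' ⊆ X`, `Y' ⊆ Y` of minimal total size among those whose excess is at least that of `(X, Y)`
has both minimum-degree properties, and
`|X'||Y'| ≥ e(X', Y') - a|X'| - b|Y'| ≥ |E| - ε|X||Y|/2 ≥ ε|X||Y|/2`.
-/

open Finset

namespace Finset

variable {α β : Type*} [DecidableEq α] [DecidableEq β] (E : Finset (α × β))

theorem card_inter_product_eq_sum_left (S : Finset α) (T : Finset β) :
    #(E ∩ S ×ˢ T) = ∑ x ∈ S, #{y ∈ T | (x, y) ∈ E} := by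
  simp only [inter_comm E, ← filter_mem_eq_inter, card_filter, sum_product]

theorem card_inter_product_eq_sum_right (S : Finset α) (T : Finset β) :
    #(E ∩ S ×ˢ T) = ∑ y ∈ T, #{x ∈ S | (x, y) ∈ E} := by
  simp only [inter_comm E, ← filter_mem_eq_inter, card_filter, sum_product_right]

theorem card_inter_product_erase_left {S : Finset α} {x : α} (hx : x ∈ S) (T : Finset β) :
    #(E ∩ S ×ˢ T) = #(E ∩ S.erase x ×ˢ T) + #{y ∈ T | (x, y) ∈ E} := by
  simp only [card_inter_product_eq_sum_left, sum_erase_add _ _ hx]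

theorem card_inter_product_erase_right (S : Finset α) {T : Finset β} {y : β} (hy : y ∈ T) :
    #(E ∩ S ×ˢ T) = #(E ∩ S ×ˢ T.erase y) + #{x ∈ S | (x, y) ∈ E} := by
  simp only [card_inter_product_eq_sum_right, sum_erase_add _ _ hy]

end Finset

section Cleaning

variable {α β : Type*} [DecidableEq α] [DecidableEq β] (E : Finset (α × β)) (a b : ℝ)

noncomputable def edgeExcess (S : Finset α) (T : Finset β) : ℝ :=
  #(E ∩ S ×ˢ T) - a * #S - b * #T

variable {E a b}

theorem edgeExcess_le_erase_left {S : Finset α} {T : Finset β} {x : α} (hx : x ∈ S)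
    (hdeg : #{y ∈ T | (x, y) ∈ E} ≤ a) :
    edgeExcess E a b S T ≤ edgeExcess E a b (S.erase x) T := by
  unfold edgeExcess
  rw [card_inter_product_erase_left E hx T, ← card_erase_add_one hx]
  push_cast
  linarith

theorem edgeExcess_le_erase_right {S : Finset α} {T : Finset β} {y : β} (hy : y ∈ T)
    (hdeg : #{x ∈ S | (x, y) ∈ E} ≤ b) :
    edgeExcess E a b S T ≤ edgeExcess E a b S (T.erase y) := by
  unfold edgeExcess
  rw [card_inter_product_erase_right E S hy, ← card_erase_add_one hy]
  push_cast
  linarith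

variable (E a b) in
theorem exists_minDegree_subsets_edgeExcess_le (X : Finset α) (Y : Finset β) :
    ∃ X' ⊆ X, ∃ Y' ⊆ Y, edgeExcess E a b X Y ≤ edgeExcess E a b X' Y' ∧
      (∀ x ∈ X', a ≤ #{y ∈ Y' | (x, y) ∈ E}) ∧ (∀ y ∈ Y', b ≤ #{x ∈ X' | (x, y) ∈ E}) := by
  obtain ⟨⟨X', Y'⟩, hmem, hmin⟩ := exists_min_image
    {p ∈ X.powerset ×ˢ Y.powerset | edgeExcess E a b X Y ≤ edgeExcess E a b p.1 p.2}
    (fun p => #p.1 + #p.2) ⟨(X, Y), by simp⟩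
  simp only [mem_filter, mem_product, mem_powerset] at hmem hmin
  obtain ⟨⟨hX', hY'⟩, hexcess⟩ := hmem
  refine ⟨X', hX', Y', hY', hexcess, fun x hx => ?_, fun y hy => ?_⟩
  · by_contra! hdeg
    have hle : #X' + #Y' ≤ #(X'.erase x) + #Y' := hmin (X'.erase x, Y')
      ⟨⟨(erase_subset x X').trans hX', hY'⟩, hexcess.trans (edgeExcess_le_erase_left hx hdeg.le)⟩
    have hlt := card_erase_lt_of_mem hx
    omega
  · by_contra! hdeg
    have hle : #X' + #Y' ≤ #X' + #(Y'.erase y) := hmin (X', Y'.erase y)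
      ⟨⟨hX', (erase_subset y Y').trans hY'⟩, hexcess.trans (edgeExcess_le_erase_right hy hdeg.le)⟩
    have hlt := card_erase_lt_of_mem hy
    omega

end Cleaning

/-- **Cleaning lemma: subgraphs of large minimum degree.** Let `H` be a bipartite graph
with parts `X`, `Y` and edge set `E ⊆ X × Y` with at least `ε·|X|·|Y|` edges, where
`ε ∈ (0, 1]`. Then there exist `X' ⊆ X` and `Y' ⊆ Y` with `|X'|·|Y'| ≥ (ε/2)·|X|·|Y|`
such that every `x ∈ X'` has at least `ε·|Y|/4` neighbours in `Y'` and every `y ∈ Y'`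
has at least `ε·|X|/4` neighbours in `X'`. -/
theorem cleaning_lemma {α β : Type*} [DecidableEq α] [DecidableEq β]
    (X : Finset α) (Y : Finset β) (E : Finset (α × β)) (hE : E ⊆ X ×ˢ Y)
    (ε : ℝ) (hε : ε ∈ Set.Ioc (0 : ℝ) 1)
    (hcard : ε * ((X.card : ℝ) * (Y.card : ℝ)) ≤ (E.card : ℝ)) :
    ∃ X' ⊆ X, ∃ Y' ⊆ Y,
      (ε / 2) * ((X.card : ℝ) * (Y.card : ℝ)) ≤ (X'.card : ℝ) * (Y'.card : ℝ) ∧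
      (∀ x ∈ X', ε * (Y.card : ℝ) / 4 ≤ ((Y'.filter fun y => (x, y) ∈ E).card : ℝ)) ∧
      (∀ y ∈ Y', ε * (X.card : ℝ) / 4 ≤ ((X'.filter fun x => (x, y) ∈ E).card : ℝ)) := by
  obtain ⟨X', hX', Y', hY', hexcess, hdegX, hdegY⟩ :=
    exists_minDegree_subsets_edgeExcess_le E (ε * #Y / 4) (ε * #X / 4) X Y
  refine ⟨X', hX', Y', hY', ?_, hdegX, hdegY⟩
  have hε0 : 0 ≤ ε := hε.1.le
  have hfull : #(E ∩ X ×ˢ Y) = #E := congrArg card (inter_eq_left.mpr hE)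
  have hsub : (#(E ∩ X' ×ˢ Y') : ℝ) ≤ #X' * #Y' := by
    exact_mod_cast (card_le_card inter_subset_right).trans (card_product X' Y').le
  unfold edgeExcess at hexcess
  rw [hfull] at hexcess
  have hpenalty : 0 ≤ ε * #Y / 4 * #X' + ε * #X / 4 * #Y' := by positivity
  linarith
end

section
/- There exists an absolute constant C > 0 (e.g. C = e^40) such that for every positive integer k and every p ∈ [0, 1]: H(p) ≤ 1 − (1 − p)^k + C/2^k, where H(p) = p·log₂(1/p) + (1−p)·log₂(1/(1−p)) is the binary entropy function (with the convention H(0) = H(1) = 0). -/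
/-- The binary entropy function `H(p) = p·log₂(1/p) + (1−p)·log₂(1/(1−p))`.
(With Lean's conventions `1/0 = 0` and `logb 2 0 = 0`, this gives `H(0) = H(1) = 0`.) -/
noncomputable def binEnt (p : ℝ) : ℝ :=
  p * Real.logb 2 (1 / p) + (1 - p) * Real.logb 2 (1 / (1 - p))

/-!
For `k` below a threshold `k₀` the inequality is trivial with `C = 2^k₀`, since `H ≤ 1`; for large
`k` split according to the size of `k p`, using Bernoulli's `(1 - p)ᵏ ≤ 1 / (1 + k p)`:
* `k² p ≤ 1`: here `1 - (1 - p)ᵏ ≥ (k - 1) p`, and `H(p) ≤ (k - 1) p + O(2⁻ᵏ)` follows from the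
  tangent-line bound `-p log p ≤ a - p - p log a` at `a = 2¹⁻ᵏ`.
* `k² p ≥ 1`, `k p ≤ 47`: `H(p) = O(p log k) = o(k p)`, while `1 - (1 - p)ᵏ ≥ k p / 48`.
* `k p ≥ 47`: `H(p) ≤ 1 - (1 - 2p)² / 12`. If `k (1 - 2p) ≤ 4` then `(1 - p)ᵏ ≤ e⁴ 2⁻ᵏ`; otherwise
  `(1 - p)ᵏ` is at most `1/48` (for `p ≤ 1/4`) or `(3/4)ᵏ ≤ 1/k²` (for `p ≥ 1/4`), both below the
  quadratic gap.
-/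

open Real Filter Set

lemma binEnt_eq_binEntropy_div (p : ℝ) : binEnt p = binEntropy p / log 2 := by
  simp only [binEnt, binEntropy, logb, one_div]
  ring

lemma binEnt_le_one (p : ℝ) : binEnt p ≤ 1 := by
  rw [binEnt_eq_binEntropy_div, div_le_one (log_pos one_lt_two)]
  exact binEntropy_le_log_two

namespace Real

variable {p : ℝ}

lemma binEntropy_le_sub_mul_log (hp0 : 0 ≤ p) (hp1 : p ≤ 1) {a : ℝ} (ha : 0 < a) :
    binEntropy p ≤ a - p * log a := by
  have hq : negMulLog (1 - p) ≤ p := by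
    linarith [negMulLog_le_one_sub_self (x := 1 - p) (by linarith)]
  have hp : negMulLog p ≤ a - p - p * log a := by
    have h := negMulLog_le_one_sub_self (div_nonneg hp0 ha.le)
    calc negMulLog p = negMulLog (a * (p / a)) := by rw [mul_div_cancel₀ _ ha.ne']
      _ = a * negMulLog (p / a) - p * log a := by
          rw [negMulLog_mul, negMulLog]; field_simp; ring
      _ ≤ a * (1 - p / a) - p * log a := by gcongr
      _ = a - p - p * log a := by field_simp
  rw [binEntropy_eq_negMulLog_add_negMulLog_one_sub]
  linarith

lemma binEntropy_one_sub_div_two_le {s : ℝ} (hs0 : 0 ≤ s) (hs : s ≤ 1 / 2) :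
    binEntropy ((1 - s) / 2) ≤ log 2 - s ^ 2 / 3 := by
  have hodd : 2 * s ≤ log (1 + s) - log (1 - s) := by
    have h := hasSum_log_sub_log_of_abs_lt_one (x := s) (by rw [abs_lt]; constructor <;> linarith)
    simpa using le_hasSum h 0 fun j _ ↦ by positivity
  have heven : -(4 / 3 * s ^ 2) ≤ log (1 + s) + log (1 - s) := by
    rw [← log_mul (by linarith) (by linarith)]
    refine le_trans ?_ (one_sub_inv_le_log_of_pos (by nlinarith))
    have hs2 : s ^ 2 ≤ 1 / 4 := by nlinarith
    rw [neg_le_sub_iff_le_add, inv_le_iff_one_le_mul₀ (by nlinarith)]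
    nlinarith [mul_nonneg (sq_nonneg s) (sub_nonneg.2 hs2)]
  have hsplit : binEntropy ((1 - s) / 2)
      = log 2 - ((1 - s) * log (1 - s) + (1 + s) * log (1 + s)) / 2 := by
    rw [binEntropy, show 1 - (1 - s) / 2 = (1 + s) / 2 by ring, inv_div, inv_div,
      log_div (by norm_num) (by linarith), log_div (by norm_num) (by linarith)]
    ring
  rw [hsplit]
  nlinarith [mul_le_mul_of_nonneg_left hodd hs0]

lemma binEntropy_le_log_two_sub_sq (hp0 : 0 ≤ p) (hp : p ≤ 1 / 2) :
    binEntropy p ≤ log 2 - (1 - 2 * p) ^ 2 / 12 := by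
  rcases le_total p (1 / 4) with hp' | hp'
  · have hmono : binEntropy p ≤ binEntropy (1 / 4) :=
      binEntropy_strictMonoOn.monotoneOn ⟨hp0, by linarith⟩ ⟨by norm_num, by norm_num⟩ hp'
    have hquarter := binEntropy_one_sub_div_two_le (s := 1 / 2) (by norm_num) le_rfl
    norm_num at hquarter
    nlinarith
  · have h := binEntropy_one_sub_div_two_le (s := 1 - 2 * p) (by linarith) (by linarith)
    rw [show (1 - (1 - 2 * p)) / 2 = p by ring] at h
    nlinarith [sq_nonneg (1 - 2 * p)]

end Real

lemma one_sub_pow_le_inv_one_add_mul {R : Type*} [Field R] [LinearOrder R] [IsStrictOrderedRing R]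
    {p : R} (hp0 : 0 ≤ p) (hp1 : p ≤ 1) (k : ℕ) :
    (1 - p) ^ k ≤ (1 + k * p)⁻¹ := by
  have hkp : 0 < 1 + k * p := by have := mul_nonneg k.cast_nonneg hp0; linarith
  rw [← one_div, le_div_iff₀ hkp]
  calc (1 - p) ^ k * (1 + k * p) ≤ (1 - p) ^ k * (1 + p) ^ k :=
        mul_le_mul_of_nonneg_left (one_add_mul_le_pow (by linarith) k) (pow_nonneg (by linarith) k)
    _ = (1 - p ^ 2) ^ k := by rw [← mul_pow]; ring
    _ ≤ 1 := pow_le_one₀ (by nlinarith) (by nlinarith)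

lemma binEnt_le_of_sq_mul_le_one {k : ℕ} {p : ℝ} (hp0 : 0 ≤ p) (hp1 : p ≤ 1)
    (hkp : (k : ℝ) ^ 2 * p ≤ 1) : binEnt p ≤ 1 - (1 - p) ^ k + 2 / log 2 / 2 ^ k := by
  have hlog2 := log_pos one_lt_two
  have hpow : (1 - p) ^ k ≤ 1 - k * p + p := by
    refine (one_sub_pow_le_inv_one_add_mul hp0 hp1 k).trans ?_
    have hkp0 : 0 ≤ k * p := mul_nonneg k.cast_nonneg hp0
    rw [inv_le_iff_one_le_mul₀ (by linarith)]
    nlinarith [mul_le_mul_of_nonneg_right hkp hp0]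
  have hH := binEntropy_le_sub_mul_log hp0 hp1 (a := 2 / 2 ^ k) (by positivity)
  rw [log_div (by norm_num) (by positivity), log_pow] at hH
  rw [binEnt_eq_binEntropy_div, div_le_iff₀ hlog2]
  calc binEntropy p ≤ 2 / 2 ^ k + (k * p - p) * log 2 := by linarith
    _ ≤ 2 / 2 ^ k + (1 - (1 - p) ^ k) * log 2 := by gcongr _ + ?_ * _; linarith
    _ = (1 - (1 - p) ^ k + 2 / log 2 / 2 ^ k) * log 2 := by field_simp; ring

lemma binEnt_le_of_one_le_sq_mul {k : ℕ} {p : ℝ} (hk : 48 * (2 * log k + 1) ≤ k * log 2)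
    (hp1 : p ≤ 1) (hkp : 1 ≤ (k : ℝ) ^ 2 * p) (hkp' : k * p ≤ 47) :
    binEnt p ≤ 1 - (1 - p) ^ k := by
  have hlog2 := log_pos one_lt_two
  have hk0 : (k : ℝ) ≠ 0 := by rintro h; norm_num [h] at hkp
  have hp0 : 0 < p := by nlinarith [sq_nonneg (k : ℝ)]
  have hH := binEntropy_le_sub_mul_log hp0.le hp1 (a := ((k : ℝ) ^ 2)⁻¹) (by positivity)
  rw [log_inv, log_pow] at hH
  have hinv : ((k : ℝ) ^ 2)⁻¹ ≤ p := by
    rw [inv_le_iff_one_le_mul₀ (by positivity)]; linarith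
  have hpow : (1 - p) ^ k ≤ 1 - k * p / 48 := by
    refine (one_sub_pow_le_inv_one_add_mul hp0.le hp1 k).trans ?_
    have hkp0 : 0 ≤ k * p := mul_nonneg k.cast_nonneg hp0.le
    rw [inv_le_iff_one_le_mul₀ (by linarith)]
    nlinarith
  rw [binEnt_eq_binEntropy_div, div_le_iff₀ hlog2]
  calc binEntropy p ≤ p * (2 * log k + 1) := by push_cast at hH; linarith
    _ ≤ p * (k * log 2 / 48) := by gcongr; linarith
    _ ≤ (1 - (1 - p) ^ k) * log 2 := by nlinarith

lemma binEnt_le_of_forty_seven_le_mul {k : ℕ} {p : ℝ} (hk : (k : ℝ) ^ 2 * (3 / 4) ^ k ≤ 1)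
    (hp1 : p ≤ 1) (hkp : 47 ≤ k * p) : binEnt p ≤ 1 - (1 - p) ^ k + exp 4 / 2 ^ k := by
  have hexp : 0 ≤ exp 4 / 2 ^ k := by positivity
  rcases le_or_gt (k * (1 - 2 * p)) 4 with hs | hs
  · have hpow : (1 - p) ^ k ≤ exp 4 / 2 ^ k :=
      calc (1 - p) ^ k ≤ (exp (1 - 2 * p) / 2) ^ k :=
            pow_le_pow_left₀ (by linarith) (by linarith [add_one_le_exp (1 - 2 * p)]) k
        _ = exp (k * (1 - 2 * p)) / 2 ^ k := by rw [div_pow, exp_nat_mul]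
        _ ≤ exp 4 / 2 ^ k := by gcongr
    linarith [binEnt_le_one p]
  have hk0 : (0 : ℝ) < k := Nat.cast_pos.2 (Nat.pos_of_ne_zero (by rintro rfl; norm_num at hs))
  have hp0 : 0 ≤ p := by nlinarith
  have hp : p ≤ 1 / 2 := by nlinarith
  have hgap : binEnt p ≤ 1 - (1 - 2 * p) ^ 2 / 12 := by
    have hlog2 := log_pos one_lt_two
    rw [binEnt_eq_binEntropy_div, div_le_iff₀ hlog2]
    nlinarith [binEntropy_le_log_two_sub_sq hp0 hp, log_two_lt_d9, sq_nonneg (1 - 2 * p)]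
  have hpow : (1 - p) ^ k ≤ (1 - 2 * p) ^ 2 / 12 := by
    rcases le_total p (1 / 4) with hp' | hp'
    · calc (1 - p) ^ k ≤ (1 + k * p)⁻¹ := one_sub_pow_le_inv_one_add_mul hp0 hp1 k
        _ ≤ 48⁻¹ := by gcongr; linarith
        _ ≤ (1 - 2 * p) ^ 2 / 12 := by nlinarith
    · calc (1 - p) ^ k ≤ (3 / 4) ^ k := by gcongr; linarith
        _ ≤ 1 / (k : ℝ) ^ 2 := by rw [le_div_iff₀ (by positivity)]; linarith
        _ ≤ (1 - 2 * p) ^ 2 / 12 := by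
          rw [div_le_div_iff₀ (by positivity) (by norm_num)]; nlinarith
  linarith

lemma eventually_binEnt_le :
    ∀ᶠ k : ℕ in atTop, ∀ p ∈ Icc (0 : ℝ) 1,
      binEnt p ≤ 1 - (1 - p) ^ k + (2 / log 2 + exp 4) / 2 ^ k := by
  have hlog : ∀ᶠ k : ℕ in atTop, 48 * (2 * log k + 1) ≤ k * log 2 := by
    have h := ((isLittleO_log_id_atTop.const_mul_left 96).add
      (Asymptotics.isLittleO_const_id_atTop (48 : ℝ))).bound (log_pos one_lt_two)
    filter_upwards [tendsto_natCast_atTop_atTop.eventually h] with k hk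
    simp only [id, norm_eq_abs, abs_of_nonneg (Nat.cast_nonneg (α := ℝ) k)] at hk
    linarith [le_abs_self (96 * log k + 48)]
  have hpow : ∀ᶠ k : ℕ in atTop, (k : ℝ) ^ 2 * (3 / 4) ^ k ≤ 1 :=
    (tendsto_pow_const_mul_const_pow_of_abs_lt_one 2 (by norm_num)).eventually_le_const one_pos
  filter_upwards [hlog, hpow] with k hlog hpow p ⟨hp0, hp1⟩
  have hA : 0 ≤ 2 / log 2 / 2 ^ k := by positivity
  have hB : 0 ≤ exp 4 / 2 ^ k := by positivity
  rw [add_div]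
  rcases le_total ((k : ℝ) ^ 2 * p) 1 with hsmall | hbig
  · linarith [binEnt_le_of_sq_mul_le_one hp0 hp1 hsmall]
  rcases le_total ((k : ℝ) * p) 47 with hmid | hlarge
  · linarith [binEnt_le_of_one_le_sq_mul hlog hp1 hbig hmid]
  · linarith [binEnt_le_of_forty_seven_le_mul hpow hp1 hlarge]

lemma exists_binEnt_le_of_eventually {C₀ : ℝ}
    (h : ∀ᶠ k : ℕ in atTop, ∀ p ∈ Icc (0 : ℝ) 1, binEnt p ≤ 1 - (1 - p) ^ k + C₀ / 2 ^ k) :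
    ∃ C : ℝ, 0 < C ∧ ∀ (k : ℕ), ∀ p ∈ Icc (0 : ℝ) 1, binEnt p ≤ 1 - (1 - p) ^ k + C / 2 ^ k := by
  obtain ⟨k₀, hk₀⟩ := eventually_atTop.1 h
  refine ⟨max C₀ (2 ^ k₀), by positivity, fun k p hp ↦ ?_⟩
  rcases le_total k₀ k with hk | hk
  · exact (hk₀ k hk p hp).trans (by gcongr; exact le_max_left _ _)
  · have hpow : (1 - p) ^ k ≤ 1 := pow_le_one₀ (by linarith [hp.2]) (by linarith [hp.1])
    have hC : 1 ≤ max C₀ (2 ^ k₀) / 2 ^ k := by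
      rw [le_div_iff₀ (by positivity), one_mul]
      exact (pow_le_pow_right₀ one_le_two hk).trans (le_max_right _ _)
    linarith [binEnt_le_one p]

/-- **Entropy inequality.** There is an absolute constant `C > 0` such that for every
positive integer `k` and every `p ∈ [0, 1]`:
`H(p) ≤ 1 − (1 − p)^k + C/2^k`. -/
theorem entropy_inequality :
    ∃ C : ℝ, 0 < C ∧
      ∀ (k : ℕ), 0 < k → ∀ p ∈ Set.Icc (0 : ℝ) 1,
        binEnt p ≤ 1 - (1 - p) ^ k + C / 2 ^ k := by
  obtain ⟨C, hC, h⟩ := exists_binEnt_le_of_eventually eventually_binEnt_le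
  exact ⟨C, hC, fun k _ ↦ h k⟩
end

section
/- Let M be an m×n real matrix which is separated, i.e. no entry of M lies in the open interval (0, 1), and suppose 0 ≤ p(M) ≤ 0.9. Then q(M) ≥ p(M)/100. -/
/-!
Every entry `x` of a separated matrix satisfies `x ≤ x²`, so the mean square of the entries is
at least their mean `p`, and the variance, mean square minus `p²`, is at least `p (1 - p)`.
For `0 ≤ p ≤ 0.9` this is at least `p / 10`.
-/

/-- The average entry `p(M)` of an `m × n` real matrix. -/
noncomputable def avgEntry {m n : ℕ} (M : Matrix (Fin m) (Fin n) ℝ) : ℝ :=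
  (∑ i, ∑ j, M i j) / ((m : ℝ) * (n : ℝ))

/-- The variance `q(M)` of the entries of an `m × n` real matrix. -/
noncomputable def varEntry {m n : ℕ} (M : Matrix (Fin m) (Fin n) ℝ) : ℝ :=
  (∑ i, ∑ j, (M i j - avgEntry M) ^ 2) / ((m : ℝ) * (n : ℝ))

open Finset

lemma le_sq_of_notMem_Ioo_zero_one {x : ℝ} (hx : x ∉ Set.Ioo 0 1) : x ≤ x ^ 2 := by
  rcases le_or_gt x 0 with hx0 | hx0
  · nlinarith
  · have hx1 : 1 ≤ x := not_lt.1 fun h => hx ⟨hx0, h⟩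
    nlinarith

lemma card_mul_mul_one_sub_le_sum_sub_sq {ι : Type*} {s : Finset ι} {f : ι → ℝ} {μ : ℝ}
    (hf : ∀ i ∈ s, f i ∉ Set.Ioo 0 1) (hμ : ∑ i ∈ s, f i = #s * μ) :
    #s * (μ * (1 - μ)) ≤ ∑ i ∈ s, (f i - μ) ^ 2 := by
  have pointwise : ∀ i ∈ s, (1 - 2 * μ) * f i + μ ^ 2 ≤ (f i - μ) ^ 2 := fun i hi => by
    nlinarith [le_sq_of_notMem_Ioo_zero_one (hf i hi)]
  calc (#s : ℝ) * (μ * (1 - μ)) = ∑ i ∈ s, ((1 - 2 * μ) * f i + μ ^ 2) := by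
        rw [sum_add_distrib, ← mul_sum, hμ, sum_const, nsmul_eq_mul]
        ring
    _ ≤ ∑ i ∈ s, (f i - μ) ^ 2 := sum_le_sum pointwise

lemma avgEntry_mul_one_sub_le_varEntry {m n : ℕ} (M : Matrix (Fin m) (Fin n) ℝ)
    (hsep : ∀ i j, M i j ∉ Set.Ioo (0 : ℝ) 1) :
    avgEntry M * (1 - avgEntry M) ≤ varEntry M := by
  rcases eq_or_ne ((m : ℝ) * n) 0 with hN | hN
  · simp [avgEntry, varEntry, hN]
  have hNpos : 0 < (m : ℝ) * n := lt_of_le_of_ne (by positivity) hN.symm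
  have hsum : ∀ g : Fin m → Fin n → ℝ, ∑ x ∈ univ ×ˢ univ, g x.1 x.2 = ∑ i, ∑ j, g i j :=
    fun g => sum_product' _ _ g
  have hcard : (#(univ ×ˢ univ : Finset (Fin m × Fin n)) : ℝ) = m * n := by simp
  have key := card_mul_mul_one_sub_le_sum_sub_sq (s := univ ×ˢ univ)
    (f := fun x : Fin m × Fin n => M x.1 x.2) (μ := avgEntry M) (fun x _ => hsep x.1 x.2)
    (by rw [hsum M, hcard, avgEntry, mul_div_cancel₀ _ hN])
  rw [hsum (fun i j => (M i j - avgEntry M) ^ 2), hcard] at key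
  rw [varEntry, le_div_iff₀ hNpos]
  linarith

/-- **Separated matrices have large variance.** Let `M` be an `m × n` real matrix with
no entry in the open interval `(0, 1)`, and suppose `0 ≤ p(M) ≤ 0.9`. Then
`q(M) ≥ p(M)/100`. -/
theorem separated_large_variance (m n : ℕ) (M : Matrix (Fin m) (Fin n) ℝ)
    (hsep : ∀ i j, M i j ∉ Set.Ioo (0 : ℝ) 1)
    (h0 : 0 ≤ avgEntry M) (h9 : avgEntry M ≤ 0.9) :
    avgEntry M / 100 ≤ varEntry M := by
  calc avgEntry M / 100 ≤ avgEntry M * (1 - avgEntry M) := by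
        nlinarith [mul_nonneg h0 (sub_nonneg.2 h9)]
    _ ≤ varEntry M := avgEntry_mul_one_sub_le_varEntry M hsep
end

section
/- Let M be an m×n matrix of rank r ≥ 1 all of whose entries are integers, and suppose that M contains no half-sized constant submatrix, i.e. there are no index sets I ⊆ [m], J ⊆ [n] with |I| ≥ m/2 and |J| ≥ n/2 such that all entries M(i,j) with (i,j) ∈ I×J are equal to one another. Then q(M) ≥ 1/(128r). -/
open Finset Module Submodule

theorem card_le_two_mul_card_filter_le {ι : Type*} [Fintype ι] {f : ι → ℝ} (hf : ∀ i, 0 ≤ f i)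
    {a : ℝ} (hsum : ∑ i, f i ≤ a * Fintype.card ι) :
    (Fintype.card ι : ℝ) ≤ 2 * #{i | f i ≤ 2 * a} := by
  set D : Finset ι := {i | ¬ f i ≤ 2 * a}
  have hcard : (#{i | f i ≤ 2 * a} : ℝ) + #D = Fintype.card ι := by
    exact_mod_cast card_filter_add_card_filter_not (s := univ) _
  rcases D.eq_empty_or_nonempty with hD | hD
  · rw [hD, card_empty, Nat.cast_zero, add_zero] at hcard
    have : (0 : ℝ) ≤ #{i | f i ≤ 2 * a} := Nat.cast_nonneg _
    linarith
  have hlt : ∑ _i ∈ D, 2 * a < ∑ i ∈ D, f i :=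
    sum_lt_sum_of_nonempty hD fun i hi => not_le.1 (mem_filter.1 hi).2
  have hle : ∑ i ∈ D, f i ≤ ∑ i, f i :=
    sum_le_sum_of_subset_of_nonneg (subset_univ D) fun i _ _ => hf i
  have hnonneg : 0 ≤ ∑ i, f i := sum_nonneg fun i _ => hf i
  have hDpos : (0 : ℝ) < #D := by exact_mod_cast hD.card_pos
  rw [sum_const, nsmul_eq_mul] at hlt
  nlinarith

theorem one_le_four_mul_sq_sub_of_ne_round (p : ℝ) {w : ℤ} (hw : w ≠ round p) :
    1 ≤ 4 * ((w : ℝ) - p) ^ 2 := by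
  have h1 : (1 : ℝ) ≤ |(w : ℝ) - round p| := by
    exact_mod_cast Int.one_le_abs (sub_ne_zero.2 hw)
  have h2 : |p - round p| ≤ 1 / 2 := abs_sub_round p
  have h3 : 1 / 2 ≤ |(w : ℝ) - p| := by
    linarith [abs_sub_le (w : ℝ) p (round p)]
  nlinarith [sq_abs ((w : ℝ) - p)]

theorem card_ne_round_le_four_mul_sum_sq_sub {κ : Type*} [Fintype κ] {x : κ → ℝ}
    (hx : ∀ j, ∃ w : ℤ, x j = w) (p : ℝ) :
    (#{j | x j ≠ round p} : ℝ) ≤ 4 * ∑ j, (x j - p) ^ 2 := by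
  rw [card_eq_sum_ones, Nat.cast_sum, mul_sum]
  calc ∑ j ∈ {j | x j ≠ round p}, ((1 : ℕ) : ℝ)
      ≤ ∑ j ∈ {j | x j ≠ round p}, 4 * (x j - p) ^ 2 := by
        refine sum_le_sum fun j hj => ?_
        obtain ⟨w, hw⟩ := hx j
        have hne : w ≠ round p := fun h => (mem_filter.1 hj).2 (by rw [hw, h])
        simpa [hw] using one_le_four_mul_sq_sub_of_ne_round p hne
    _ ≤ ∑ j, 4 * (x j - p) ^ 2 :=
        sum_le_sum_of_subset_of_nonneg (subset_univ _) fun j _ _ => by positivity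

theorem card_biUnion_ne_round_le {ι κ : Type*} [Fintype κ] [DecidableEq κ] {M : ι → κ → ℝ}
    (hM : ∀ i j, ∃ w : ℤ, M i j = w) (p : ℝ) {F : Finset ι} {b : ℝ}
    (hF : ∀ i ∈ F, ∑ j, (M i j - p) ^ 2 ≤ b) :
    (#(F.biUnion fun i => {j | M i j ≠ round p}) : ℝ) ≤ #F * (4 * b) := by
  calc (#(F.biUnion fun i => {j | M i j ≠ round p}) : ℝ)
      ≤ ∑ i ∈ F, (#{j | M i j ≠ round p} : ℝ) := by exact_mod_cast card_biUnion_le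
    _ ≤ ∑ _i ∈ F, 4 * b := sum_le_sum fun i hi =>
        (card_ne_round_le_four_mul_sum_sq_sub (hM i) p).trans (by linarith [hF i hi])
    _ = #F * (4 * b) := by rw [sum_const, nsmul_eq_mul]

/-- `F` is chosen so that the `v f`, `f ∈ F`, span every `v i`, `i ∈ I`; a coordinate that
vanishes on the former therefore vanishes on the latter. -/
theorem exists_subset_card_le_finrank_forall_apply_eq_zero {ι κ K : Type*} [Field K]
    (W : Submodule K (κ → K)) [FiniteDimensional K W] (v : ι → κ → K) (I : Finset ι)
    (hv : ∀ i ∈ I, v i ∈ W) :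
    ∃ F ⊆ I, #F ≤ finrank K W ∧ ∀ j, (∀ f ∈ F, v f j = 0) → ∀ i ∈ I, v i j = 0 := by
  classical
  obtain ⟨σ, a, ha, hspan, hli⟩ := exists_linearIndependent' K fun i : I => v i
  have : Finite σ := Finite.of_injective a ha
  have : Fintype σ := Fintype.ofFinite σ
  refine ⟨univ.image fun s => (a s : ι), fun i hi => ?_, ?_, fun j hj i hi => ?_⟩
  · obtain ⟨s, -, rfl⟩ := mem_image.1 hi
    exact (a s).2
  · refine card_image_le.trans ?_
    rw [card_univ, ← finrank_span_eq_card hli]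
    refine finrank_mono (span_le.2 ?_)
    rintro _ ⟨s, rfl⟩
    exact hv _ (a s).2
  · have hker : span K (Set.range fun i : I => v i) ≤ LinearMap.ker (LinearMap.proj j) := by
      rw [← hspan, span_le]
      rintro _ ⟨s, rfl⟩
      exact hj _ (mem_image_of_mem _ (mem_univ s))
    exact hker (subset_span ⟨⟨i, hi⟩, rfl⟩)

theorem Matrix.finrank_span_row_sup_span_singleton_le {m n K : Type*} [Field K] [Finite m]
    [Fintype n] (A : Matrix m n K) (c : n → K) :
    finrank K ↥(span K (Set.range A.row) ⊔ K ∙ c) ≤ A.rank + 1 := by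
  refine (finrank_add_le_finrank_add_finrank _ _).trans
    (add_le_add A.rank_eq_finrank_span_row.ge ?_)
  simpa using finrank_span_le_card (R := K) ({c} : Set (n → K))

theorem varEntry_nonneg {m n : ℕ} (M : Matrix (Fin m) (Fin n) ℝ) : 0 ≤ varEntry M := by
  unfold varEntry
  positivity

/-- Also for `m * n = 0`, where both sides vanish since `x / 0 = 0`. -/
theorem sum_sum_sq_sub_avgEntry_eq {m n : ℕ} (M : Matrix (Fin m) (Fin n) ℝ) :
    ∑ i, ∑ j, (M i j - avgEntry M) ^ 2 = varEntry M * (m * n) := by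
  rcases eq_or_ne ((m : ℝ) * n) 0 with h | h
  · obtain hm | hn := mul_eq_zero.1 h <;> norm_cast at * <;> subst_vars <;> simp
  · exact (div_mul_cancel₀ _ h).symm

theorem half_le_card_filter_sum_sq_sub_avgEntry_le {m n : ℕ} (M : Matrix (Fin m) (Fin n) ℝ) :
    (m : ℝ) / 2 ≤ #{i | ∑ j, (M i j - avgEntry M) ^ 2 ≤ 2 * (varEntry M * n)} := by
  have := card_le_two_mul_card_filter_le (f := fun i => ∑ j, (M i j - avgEntry M) ^ 2)
    (a := varEntry M * n) (fun i => by positivity)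
    (le_of_eq (by rw [sum_sum_sq_sub_avgEntry_eq, Fintype.card_fin]; ring))
  rw [Fintype.card_fin] at this
  linarith

/-- **Integer matrices without half-sized constant submatrices have large variance.**
Let `M` be an `m × n` matrix of rank `r ≥ 1` with integer entries. If there are no
`I ⊆ [m]`, `J ⊆ [n]` with `|I| ≥ m/2`, `|J| ≥ n/2` such that all entries of `M[I×J]`
are equal to one another, then `q(M) ≥ 1/(128r)`. -/
theorem no_constant_submatrix_large_variance (m n r : ℕ)
    (M : Matrix (Fin m) (Fin n) ℝ)
    (hint : ∀ i j, ∃ z : ℤ, M i j = (z : ℝ))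
    (hrank : M.rank = r) (hr : 1 ≤ r)
    (hno : ¬ ∃ (I : Finset (Fin m)) (J : Finset (Fin n)),
        (m : ℝ) / 2 ≤ (I.card : ℝ) ∧ (n : ℝ) / 2 ≤ (J.card : ℝ) ∧
        ∀ i ∈ I, ∀ j ∈ J, ∀ i' ∈ I, ∀ j' ∈ J, M i j = M i' j') :
    1 / (128 * (r : ℝ)) ≤ varEntry M := by
  by_contra! hsmall
  set p := avgEntry M
  set q := varEntry M
  set z : ℝ := ↑(round p)
  set I : Finset (Fin m) := {i | ∑ j, (M i j - p) ^ 2 ≤ 2 * (q * n)}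
  obtain ⟨F, hFI, hFW, hF⟩ := exists_subset_card_le_finrank_forall_apply_eq_zero
    (span ℝ (Set.range M.row) ⊔ ℝ ∙ fun _ => z) (fun i => M i - fun _ => z) I
    fun i _ => sub_mem (mem_sup_left (subset_span ⟨i, rfl⟩))
      (mem_sup_right (mem_span_singleton_self _))
  have hFr : (#F : ℝ) ≤ r + 1 := by
    exact_mod_cast hrank ▸ hFW.trans (M.finrank_span_row_sup_span_singleton_le _)
  set T := F.biUnion fun i => {j | M i j ≠ z}
  have hT : (#T : ℝ) ≤ n / 2 := by
    have hTF := card_biUnion_ne_round_le hint p fun i hi => (mem_filter.1 (hFI hi)).2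
    have h128 : 128 * r * q < 1 := by rwa [lt_div_iff₀ (by positivity), mul_comm] at hsmall
    have hqn : 0 ≤ q * n := mul_nonneg (varEntry_nonneg M) n.cast_nonneg
    have hr' : (1 : ℝ) ≤ r := by exact_mod_cast hr
    nlinarith [mul_le_mul_of_nonneg_right hFr (by positivity : (0 : ℝ) ≤ 4 * (2 * (q * n)))]
  have hconst : ∀ i ∈ I, ∀ j ∉ T, M i j = z := fun i hi j hj =>
    sub_eq_zero.1 <| hF j (fun f hf => sub_eq_zero.2 <| by_contra fun h =>
      hj (mem_biUnion.2 ⟨f, hf, mem_filter.2 ⟨mem_univ _, h⟩⟩)) i hi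
  have hTc : (#T : ℝ) + #Tᶜ = n := by exact_mod_cast (card_add_card_compl T).trans (by simp)
  refine hno ⟨I, Tᶜ, half_le_card_filter_sum_sq_sub_avgEntry_le M, by linarith,
    fun i hi j hj i' hi' j' hj' => ?_⟩
  rw [hconst i hi j (mem_compl.1 hj), hconst i' hi' j' (mem_compl.1 hj')]
end
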